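/- Under Assumption 2, for every x ∈ 𝒳, t ∈ 𝒯 and y ∈ 𝒴 such that P(X=x, T=t, R^X=1, R^T=1) > 0 and P(X=x, Y=y, R^X=1, R^T=1) > 0, the observed joint factorizes as P(Y=y, R^Y=1 | T=t, X=x, R^T=1, R^X=1) = P(Y=y | T=t, X=x) · P(R^Y=1 | X=x, Y=y, R^X=1, R^T=1). -/
import Mathlib


open scoped Classical
noncomputable section

namespace CATEMNAR

variable {Ω : Type*} [Fintype Ω]

/-- Probability of the event `E` under the pmf `p` on the finite space `Ω`. -/
def Pr (p : Ω → ℝ) (E : Ω → Prop) : ℝ := ∑ ω, if E ω then p ω else 0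

/-- Conditional probability `P(E | C)` (junk value `0` when `P(C) = 0`). -/
def CPr (p : Ω → ℝ) (E C : Ω → Prop) : ℝ := Pr p (fun ω => E ω ∧ C ω) / Pr p C

/-- Conditional independence `A ⫫ B | C` under `p`: for all values `a, b, c` with
`P(C = c) > 0`, `P(A = a, B = b | C = c) = P(A = a | C = c) * P(B = b | C = c)`. -/
def CondIndep {α β γ : Type*} (p : Ω → ℝ) (A : Ω → α) (B : Ω → β) (C : Ω → γ) : Prop :=
  ∀ (a : α) (b : β) (c : γ), 0 < Pr p (fun ω => C ω = c) →
    CPr p (fun ω => A ω = a ∧ B ω = b) (fun ω => C ω = c) =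
      CPr p (fun ω => A ω = a) (fun ω => C ω = c) *
        CPr p (fun ω => B ω = b) (fun ω => C ω = c)

lemma Pr_nonneg (p : Ω → ℝ) (hp0 : ∀ ω, 0 ≤ p ω) (E : Ω → Prop) : 0 ≤ Pr p E :=
  Finset.sum_nonneg fun ω _ => by by_cases hE : E ω <;> simp [hE, hp0 ω]

lemma Pr_congr (p : Ω → ℝ) {E F : Ω → Prop} (h : ∀ ω, E ω ↔ F ω) : Pr p E = Pr p F := by
  unfold Pr; exact Finset.sum_congr rfl fun ω _ => by simp [h ω]

lemma Pr_mono (p : Ω → ℝ) (hp0 : ∀ ω, 0 ≤ p ω) {E F : Ω → Prop} (h : ∀ ω, E ω → F ω) :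
    Pr p E ≤ Pr p F := by
  unfold Pr
  refine Finset.sum_le_sum fun ω _ => ?_
  by_cases hE : E ω
  · simp [hE, h ω hE]
  · simp only [hE, if_false]
    split <;> [exact hp0 ω; exact le_refl 0]

lemma Pr_pos_of (p : Ω → ℝ) (hp0 : ∀ ω, 0 ≤ p ω) {E F : Ω → Prop} (h : ∀ ω, E ω → F ω)
    (hE : 0 < Pr p E) : 0 < Pr p F := lt_of_lt_of_le hE (Pr_mono p hp0 h)

lemma Pr_zero_of (p : Ω → ℝ) (hp0 : ∀ ω, 0 ≤ p ω) {E F : Ω → Prop} (h : ∀ ω, E ω → F ω)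
    (hF : Pr p F = 0) : Pr p E = 0 :=
  le_antisymm (hF ▸ Pr_mono p hp0 h)
    (Finset.sum_nonneg fun ω _ => by by_cases hE : E ω <;> simp [hE, hp0 ω])

lemma CPr_congr (p : Ω → ℝ) {E E' C C' : Ω → Prop} (hE : ∀ ω, E ω ↔ E' ω)
    (hC : ∀ ω, C ω ↔ C' ω) : CPr p E C = CPr p E' C' := by
  unfold CPr
  rw [Pr_congr p (F := fun ω => E' ω ∧ C' ω) (fun ω => by rw [hE ω, hC ω]),
    Pr_congr p hC]

lemma CondIndep.symm {α β γ : Type*} {p : Ω → ℝ} {A : Ω → α} {B : Ω → β} {C : Ω → γ}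
    (h : CondIndep p A B C) : CondIndep p B A C := by
  intro b a c hc
  have := h a b c hc
  rw [CPr_congr p (E' := fun ω => A ω = a ∧ B ω = b) (C' := fun ω => C ω = c)
    (fun ω => by tauto) (fun ω => Iff.rfl), this, mul_comm]

/-- Drop an independent conditioning event. -/
lemma cond_drop {α β γ : Type*} (p : Ω → ℝ) (hp0 : ∀ ω, 0 ≤ p ω) {A : Ω → α} {B : Ω → β}
    {C : Ω → γ} (h : CondIndep p A B C) (a : α) (b : β) (c : γ)
    (hbc : 0 < Pr p (fun ω => B ω = b ∧ C ω = c)) :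
    CPr p (fun ω => A ω = a) (fun ω => B ω = b ∧ C ω = c) =
      CPr p (fun ω => A ω = a) (fun ω => C ω = c) := by
  have hc : 0 < Pr p (fun ω => C ω = c) := Pr_pos_of p hp0 (fun ω h => h.2) hbc
  have hprod := h a b c hc
  unfold CPr at hprod ⊢
  rw [Pr_congr p (F := fun ω => A ω = a ∧ B ω = b ∧ C ω = c) (fun ω => by tauto)] at hprod
  rw [Pr_congr p (E := fun ω => A ω = a ∧ B ω = b ∧ C ω = c)
      (F := fun ω => A ω = a ∧ B ω = b ∧ C ω = c) (fun ω => Iff.rfl)]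
  rw [div_eq_div_iff hbc.ne' hc.ne']
  rw [div_eq_iff hc.ne', div_mul_div_comm, div_mul_eq_mul_div,
    eq_div_iff (by positivity)] at hprod
  apply mul_right_cancel₀ hc.ne'
  linear_combination hprod

/-- Chain rule. -/
lemma CPr_chain (p : Ω → ℝ) {E F D : Ω → Prop} (hED : 0 < Pr p (fun ω => E ω ∧ D ω)) :
    CPr p (fun ω => E ω ∧ F ω) D =
      CPr p E D * CPr p F (fun ω => E ω ∧ D ω) := by
  simp only [CPr]
  rw [Pr_congr p (E := fun ω => (E ω ∧ F ω) ∧ D ω) (F := fun ω => F ω ∧ E ω ∧ D ω)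
    (fun ω => by tauto)]
  rw [div_mul_div_comm, mul_comm (Pr p D), mul_div_mul_left _ _ hED.ne']



/-- Under Assumption 2, the observed joint factorizes as
`P(Y=y, R^Y=1 | T=t, X=x, R^T=1, R^X=1)
  = P(Y=y | T=t, X=x) * P(R^Y=1 | X=x, Y=y, R^X=1, R^T=1)`. -/
theorem stmt_2 {𝒳 𝒯 𝒴 : Type*} [Fintype 𝒳] [Fintype 𝒯] [Fintype 𝒴]
    (p : Ω → ℝ) (hp0 : ∀ ω, 0 ≤ p ω) (hp1 : ∑ ω, p ω = 1)
    (X : Ω → 𝒳) (T : Ω → 𝒯) (Y : Ω → 𝒴) (RX RT RY : Ω → Bool)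
    (hRX : CondIndep p RX Y (fun ω => (X ω, T ω)))
    (hRT : CondIndep p RT Y (fun ω => (X ω, T ω, RX ω)))
    (hRY : CondIndep p RY T (fun ω => (X ω, Y ω, RX ω, RT ω)))
    (x : 𝒳) (t : 𝒯) (y : 𝒴)
    (hpos1 : 0 < Pr p (fun ω => X ω = x ∧ T ω = t ∧ RX ω = true ∧ RT ω = true))
    (hpos2 : 0 < Pr p (fun ω => X ω = x ∧ Y ω = y ∧ RX ω = true ∧ RT ω = true)) :
    CPr p (fun ω => Y ω = y ∧ RY ω = true)
        (fun ω => T ω = t ∧ X ω = x ∧ RT ω = true ∧ RX ω = true) =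
      CPr p (fun ω => Y ω = y) (fun ω => T ω = t ∧ X ω = x) *
        CPr p (fun ω => RY ω = true)
          (fun ω => X ω = x ∧ Y ω = y ∧ RX ω = true ∧ RT ω = true) := by
  set D : Ω → Prop := fun ω => T ω = t ∧ X ω = x ∧ RT ω = true ∧ RX ω = true with hDdef
  have hD : 0 < Pr p D := by
    refine lt_of_lt_of_le hpos1 (le_of_eq (Pr_congr p fun ω => ?_)); simp only [hDdef]; try tauto
  -- Step A+B : P(Y=y | D) = P(Y=y | T=t, X=x)
  have hstepB : CPr p (fun ω => Y ω = y) D =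
      CPr p (fun ω => Y ω = y) (fun ω => T ω = t ∧ X ω = x) := by
    have h1 := cond_drop p hp0 hRT.symm y true (x, t, true)
      (by refine Pr_pos_of p hp0 (E := fun ω => X ω = x ∧ T ω = t ∧ RX ω = true ∧ RT ω = true)
            (fun ω h => ?_) hpos1
          simp only [Prod.mk.injEq]; try tauto)
    have h2 := cond_drop p hp0 hRX.symm y true (x, t)
      (by refine Pr_pos_of p hp0 (E := fun ω => X ω = x ∧ T ω = t ∧ RX ω = true ∧ RT ω = true)
            (fun ω h => ?_) hpos1
          simp only [Prod.mk.injEq]; try tauto)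
    calc CPr p (fun ω => Y ω = y) D
        = CPr p (fun ω => Y ω = y)
            (fun ω => RT ω = true ∧ (X ω, T ω, RX ω) = (x, t, true)) := by
          refine CPr_congr p (fun ω => Iff.rfl) (fun ω => ?_)
          simp only [hDdef, Prod.mk.injEq]; try tauto
      _ = CPr p (fun ω => Y ω = y) (fun ω => (X ω, T ω, RX ω) = (x, t, true)) := h1
      _ = CPr p (fun ω => Y ω = y) (fun ω => RX ω = true ∧ (X ω, T ω) = (x, t)) := by
          refine CPr_congr p (fun ω => Iff.rfl) (fun ω => ?_)
          simp only [Prod.mk.injEq]; try tauto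
      _ = CPr p (fun ω => Y ω = y) (fun ω => (X ω, T ω) = (x, t)) := h2
      _ = CPr p (fun ω => Y ω = y) (fun ω => T ω = t ∧ X ω = x) := by
          refine CPr_congr p (fun ω => Iff.rfl) (fun ω => ?_)
          simp only [Prod.mk.injEq]; try tauto
  by_cases hfull : 0 < Pr p (fun ω => Y ω = y ∧ D ω)
  · -- positive case
    have h3 := cond_drop p hp0 hRY true t (x, y, true, true)
      (by refine Pr_pos_of p hp0 (E := fun ω => Y ω = y ∧ D ω) (fun ω h => ?_) hfull
          simp only [hDdef, Prod.mk.injEq] at h ⊢; try tauto)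
    have hstepC : CPr p (fun ω => RY ω = true) (fun ω => Y ω = y ∧ D ω) =
        CPr p (fun ω => RY ω = true)
          (fun ω => X ω = x ∧ Y ω = y ∧ RX ω = true ∧ RT ω = true) := by
      calc CPr p (fun ω => RY ω = true) (fun ω => Y ω = y ∧ D ω)
          = CPr p (fun ω => RY ω = true)
              (fun ω => T ω = t ∧ (X ω, Y ω, RX ω, RT ω) = (x, y, true, true)) := by
            refine CPr_congr p (fun ω => Iff.rfl) (fun ω => ?_)
            simp only [hDdef, Prod.mk.injEq]; try tauto
        _ = CPr p (fun ω => RY ω = true)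
              (fun ω => (X ω, Y ω, RX ω, RT ω) = (x, y, true, true)) := h3
        _ = CPr p (fun ω => RY ω = true)
              (fun ω => X ω = x ∧ Y ω = y ∧ RX ω = true ∧ RT ω = true) := by
            refine CPr_congr p (fun ω => Iff.rfl) (fun ω => ?_)
            simp only [Prod.mk.injEq]; try tauto
    rw [CPr_chain p hfull, hstepB, hstepC]
  · -- degenerate case : P(Y=y, D) = 0
    have hz : Pr p (fun ω => Y ω = y ∧ D ω) = 0 :=
      le_antisymm (not_lt.mp hfull) (Pr_nonneg p hp0 _)
    have hnum : Pr p (fun ω => (Y ω = y ∧ RY ω = true) ∧ D ω) = 0 :=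
      Pr_zero_of p hp0 (fun ω h => ⟨h.1.1, h.2⟩) hz
    rw [CPr, hnum, zero_div, ← hstepB, CPr, hz, zero_div, zero_mul]


end CATEMNAR
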